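/- Let Γ₂ be the Christoffel symbol on ℝ² of Definition 1.10 (Γ_{11}¹ = 1/√2, Γ_{12}² = −1/√2, Γ_{22}¹ = −1/√2, symmetric in lower indices, other components 0), and let R_θ ∈ SO(2) be rotation by angle θ. Then R_θ acting on Γ₂ as a (2,1)-tensor fixes Γ₂ if and only if θ ∈ {0, 2π/3, 4π/3}; i.e. the orientation-preserving isotropy group of Γ₂ inside SO(2) is cyclic of order 3. -/

import Mathlib

/-!
Lowering the upper index with the Euclidean metric turns `Γ₂` into the totally symmetric cubic
form `(1/√2) Re z³`, `z = x + iy`. A rotation by `θ` multiplies `z³` by a unit complex number of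
argument `∓3θ`, so it sends `Γ₂` to `cos 3θ • Γ₂ + sin 3θ • Γ₂⊥`, where `Γ₂⊥` is the tensor of
`(1/√2) Im z³`. Hence `R_θ` fixes `Γ₂` exactly when `cos 3θ = 1`, i.e. when `3θ ∈ 2πℤ`.
-/

open Matrix Real BigOperators

/-- The torsion-free Christoffel symbol `Γ₂` on `ℝ²` of Definition 1.10:
`Γ_{11}¹ = 1/√2`, `Γ_{12}² = Γ_{21}² = −1/√2`, `Γ_{22}¹ = −1/√2`, all other
components zero. -/
noncomputable def gammaTwo : Fin 2 → Fin 2 → Fin 2 → ℝ :=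
  ![![![1 / Real.sqrt 2, 0], ![0, -(1 / Real.sqrt 2)]],
    ![![0, -(1 / Real.sqrt 2)], ![-(1 / Real.sqrt 2), 0]]]

noncomputable def gammaTwoPerp : Fin 2 → Fin 2 → Fin 2 → ℝ :=
  ![![![0, 1 / √2], ![1 / √2, 0]],
    ![![1 / √2, 0], ![0, -(1 / √2)]]]

lemma inv_rotation (θ : ℝ) :
    !![cos θ, sin θ; -sin θ, cos θ]⁻¹ = !![cos θ, -sin θ; sin θ, cos θ] := by
  refine inv_eq_right_inv ?_
  rw [mul_fin_two, one_fin_two]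
  ext i j
  fin_cases i <;> fin_cases j <;> simp [← sq, mul_comm]

lemma cos_three_mul' (θ : ℝ) : cos (3 * θ) = cos θ ^ 3 - 3 * cos θ * sin θ ^ 2 := by
  rw [cos_three_mul]
  linear_combination 3 * cos θ * sin_sq_add_cos_sq θ

lemma sin_three_mul' (θ : ℝ) : sin (3 * θ) = 3 * cos θ ^ 2 * sin θ - sin θ ^ 3 := by
  rw [sin_three_mul]
  linear_combination -3 * sin θ * sin_sq_add_cos_sq θ

lemma rotation_action_gammaTwo (θ : ℝ) (i j k : Fin 2) :
    ∑ p, ∑ q, ∑ r, !![cos θ, sin θ; -sin θ, cos θ] p i * !![cos θ, sin θ; -sin θ, cos θ] q j *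
        !![cos θ, sin θ; -sin θ, cos θ]⁻¹ k r * gammaTwo p q r
      = cos (3 * θ) * gammaTwo i j k + sin (3 * θ) * gammaTwoPerp i j k := by
  rw [inv_rotation, cos_three_mul', sin_three_mul']
  fin_cases i <;> fin_cases j <;> fin_cases k <;>
    simp only [gammaTwo, gammaTwoPerp, Fin.sum_univ_two, of_apply, cons_val', cons_val_zero,
      cons_val_one, empty_val', cons_val_fin_one, Fin.zero_eta, Fin.mk_one, Fin.isValue] <;>
    ring

lemma rotated_gammaTwo_eq_iff (θ : ℝ) :
    (∀ i j k, cos (3 * θ) * gammaTwo i j k + sin (3 * θ) * gammaTwoPerp i j k = gammaTwo i j k)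
      ↔ cos (3 * θ) = 1 := by
  constructor
  · intro h
    have h000 := h 0 0 0
    simp only [gammaTwo, gammaTwoPerp, cons_val_zero, mul_zero, add_zero] at h000
    exact (mul_eq_right₀ (by positivity)).mp h000
  · intro h i j k
    have hsin : sin (3 * θ) = 0 := sin_eq_zero_iff_cos_eq.mpr (Or.inl h)
    simp [h, hsin]

lemma cos_three_mul_eq_one_iff {θ : ℝ} (h0 : 0 ≤ θ) (h2π : θ < 2 * π) :
    cos (3 * θ) = 1 ↔ θ = 0 ∨ θ = 2 * π / 3 ∨ θ = 4 * π / 3 := by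
  rw [cos_eq_one_iff]
  constructor
  · rintro ⟨n, hn⟩
    have hn0 : 0 ≤ n := by exact_mod_cast (show (0 : ℝ) ≤ n by nlinarith [pi_pos])
    have hn3 : n < 3 := by exact_mod_cast (show (n : ℝ) < 3 by nlinarith [pi_pos])
    interval_cases n <;> push_cast at hn
    · left; linarith
    · right; left; linarith
    · right; right; linarith
  · rintro (rfl | rfl | rfl)
    · exact ⟨0, by simp⟩
    · exact ⟨1, by ring⟩
    · exact ⟨2, by push_cast; ring⟩

/-- The rotation `R_θ ∈ SO(2)` fixes `Γ₂` under the `(2,1)`-tensor action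
`(TΓ)_{ij}^k = ∑ T_{pi} T_{qj} (T⁻¹)_{kr} Γ_{pq}^r` if and only if
`θ ∈ {0, 2π/3, 4π/3}` (for `0 ≤ θ < 2π`); i.e. the isotropy group of `Γ₂` inside
`SO(2)` is cyclic of order 3. -/
theorem stmt15 (θ : ℝ) (h0 : 0 ≤ θ) (h2π : θ < 2 * Real.pi) :
    let R : Matrix (Fin 2) (Fin 2) ℝ := !![Real.cos θ, Real.sin θ; -Real.sin θ, Real.cos θ]
    ((∀ i j k, (∑ p, ∑ q, ∑ r, R p i * R q j * R⁻¹ k r * gammaTwo p q r) = gammaTwo i j k)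
      ↔ (θ = 0 ∨ θ = 2 * Real.pi / 3 ∨ θ = 4 * Real.pi / 3)) := by
  intro R
  simp only [R, rotation_action_gammaTwo]
  rw [rotated_gammaTwo_eq_iff, cos_three_mul_eq_one_iff h0 h2π]
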